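/- Every unit of ℋ has bounded coefficients: if f = ∑_{n≥0} a_n X^n and g = ∑_{n≥0} b_n X^n are elements of ℋ with f·g = 1, then sup_n ‖a_n‖ < ∞ and sup_n ‖b_n‖ < ∞. Consequently the group of units of ℋ coincides with the group of units of the subring Λ[1/p] of ℋ consisting of power series with bounded coefficient sequence (the subring 𝒪_E[[X]] ⊗ ℚ_p, where 𝒪_E is the ring of integers of E). -/

import Mathlib

/-!
For `0 < r < 1` the largest term `‖aₙ‖ rⁿ` of a unit `f` of `ℋ` behaves multiplicatively over
an ultrametric field: if `m` and `n` are the first indices at which the maxima for `f` and its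
inverse `g` are attained, then `aₘ bₙ` strictly dominates all other terms of the coefficient of
`X^(m+n)` in `f g = 1`, which therefore is nonzero, so `m = n = 0`. Hence `‖aₖ‖ rᵏ ≤ ‖a₀‖` for
all `k`, and letting `r → 1` bounds the coefficients of `f` by `‖a₀‖`.
-/

open Filter PowerSeries

/-- The set of power series over `E` converging on the open `p`-adic unit disc:
`f = ∑ aₙ Xⁿ` with `‖aₙ‖ · rⁿ → 0` for every `0 ≤ r < 1`.  (The underlying set of the
ring `ℋ`.) -/
def Hcal (E : Type) [NormedField E] : Set (PowerSeries E) :=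
  {f | ∀ r : ℝ, 0 ≤ r → r < 1 →
    Tendsto (fun n : ℕ => ‖(PowerSeries.coeff n) f‖ * r ^ n) atTop (nhds 0)}

/-- The set of power series over `E` with bounded coefficient sequence; this is the
underlying set of the subring `Λ[1/p] = 𝒪_E[[X]] ⊗ ℚ_p` of `ℋ`. -/
def LambdaInvP (E : Type) [NormedField E] : Set (PowerSeries E) :=
  {f | ∃ C : ℝ, ∀ n : ℕ, ‖(PowerSeries.coeff n) f‖ ≤ C}

open scoped Topology

namespace IsUltrametricDist

theorem norm_sum_eq_of_forall_norm_lt {ι M : Type*} [SeminormedAddCommGroup M]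
    [IsUltrametricDist M] {s : Finset ι} {f : ι → M} {a : ι} (ha : a ∈ s)
    (hlt : ∀ i ∈ s, i ≠ a → ‖f i‖ < ‖f a‖) : ‖∑ i ∈ s, f i‖ = ‖f a‖ := by
  classical
  rw [← Finset.add_sum_erase s f ha]
  rcases (s.erase a).eq_empty_or_nonempty with hempty | hne
  · simp [hempty]
  obtain ⟨i, hi, hle⟩ := exists_norm_finsetSum_le_of_nonempty hne f
  have hrest : ‖∑ i ∈ s.erase a, f i‖ < ‖f a‖ :=
    hle.trans_lt (hlt i (Finset.mem_of_mem_erase hi) (Finset.ne_of_mem_erase hi))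
  rw [norm_add_eq_max_of_norm_ne_norm hrest.ne', max_eq_left hrest.le]

end IsUltrametricDist

theorem exists_isLeast_argmax_of_tendsto_zero {u : ℕ → ℝ} (hu : Tendsto u atTop (𝓝 0))
    (h0 : 0 < u 0) : ∃ m, IsLeast {i | ∀ j, u j ≤ u i} m := by
  classical
  obtain ⟨N, hN⟩ := (hu.eventually (gt_mem_nhds h0)).exists_forall_of_atTop
  obtain ⟨m, hm, hmax⟩ := (Finset.range (N + 1)).exists_max_image u ⟨0, by simp⟩
  have hbdd : ∀ j, u j ≤ u m := by
    intro j
    rcases le_or_gt j N with hj | hj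
    · exact hmax j (Finset.mem_range.2 (Nat.lt_succ_of_le hj))
    · exact (hN j hj.le).le.trans (hmax 0 (by simp))
  exact ⟨_, Nat.isLeast_find ⟨m, hbdd⟩⟩

theorem lt_of_isLeast_argmax {u : ℕ → ℝ} {m i : ℕ} (hm : IsLeast {i | ∀ j, u j ≤ u i} m)
    (hi : i < m) : u i < u m := by
  refine (hm.1 i).lt_of_ne fun heq => hi.not_ge (hm.2 fun j => ?_)
  exact (hm.1 j).trans_eq heq.symm

theorem mul_lt_mul_of_isLeast_argmax {u v : ℕ → ℝ} (hu : ∀ i, 0 ≤ u i) (hv : ∀ j, 0 ≤ v j)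
    {m n : ℕ} (hm : IsLeast {i | ∀ j, u j ≤ u i} m) (hn : IsLeast {j | ∀ i, v i ≤ v j} n)
    (hum : 0 < u m) (hvn : 0 < v n) {i j : ℕ} (hij : i + j = m + n) (hne : (i, j) ≠ (m, n)) :
    u i * v j < u m * v n := by
  rcases lt_or_ge i m with him | hmi
  · calc u i * v j ≤ u i * v n := mul_le_mul_of_nonneg_left (hn.1 j) (hu i)
      _ < u m * v n := mul_lt_mul_of_pos_right (lt_of_isLeast_argmax hm him) hvn
  · have hjn : j < n := by
      by_contra! hnj
      exact hne (Prod.ext (by omega) (by omega))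
    calc u i * v j ≤ u m * v j := mul_le_mul_of_nonneg_right (hm.1 i) (hv j)
      _ < u m * v n := mul_lt_mul_of_pos_left (lt_of_isLeast_argmax hn hjn) hum

namespace PowerSeries

variable {E : Type} [NormedField E]

/-- The terms `‖aₙ‖ rⁿ` whose maximum over `n` is the Gauss norm of `f` on the circle of
radius `r`. -/
noncomputable def weightedNorm (r : ℝ) (f : PowerSeries E) (n : ℕ) : ℝ := ‖coeff n f‖ * r ^ n

theorem weightedNorm_nonneg {r : ℝ} (hr : 0 ≤ r) (f : PowerSeries E) (n : ℕ) :
    0 ≤ weightedNorm r f n := by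
  unfold weightedNorm
  positivity

theorem weightedNorm_pos_iff {r : ℝ} (hr : 0 < r) {f : PowerSeries E} {n : ℕ} :
    0 < weightedNorm r f n ↔ coeff n f ≠ 0 := by
  rw [weightedNorm, mul_pos_iff_of_pos_right (pow_pos hr n), norm_pos_iff]

variable [IsUltrametricDist E]

theorem norm_coeff_add_mul_eq_of_isLeast_argmax {f g : PowerSeries E} {r : ℝ} (hr : 0 < r)
    {m n : ℕ} (hm : IsLeast {i | ∀ j, weightedNorm r f j ≤ weightedNorm r f i} m)
    (hn : IsLeast {j | ∀ i, weightedNorm r g i ≤ weightedNorm r g j} n)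
    (hfm : coeff m f ≠ 0) (hgn : coeff n g ≠ 0) :
    ‖coeff (m + n) (f * g)‖ = ‖coeff m f‖ * ‖coeff n g‖ := by
  rw [coeff_mul, IsUltrametricDist.norm_sum_eq_of_forall_norm_lt (a := (m, n)) (by simp),
    norm_mul]
  rintro ⟨i, j⟩ hij hne
  rw [Finset.HasAntidiagonal.mem_antidiagonal] at hij
  have key := mul_lt_mul_of_isLeast_argmax (weightedNorm_nonneg hr.le f)
    (weightedNorm_nonneg hr.le g) hm hn ((weightedNorm_pos_iff hr).2 hfm)
    ((weightedNorm_pos_iff hr).2 hgn) hij hne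
  have hweight : ∀ a b, a + b = m + n →
      weightedNorm r f a * weightedNorm r g b = ‖coeff a f * coeff b g‖ * r ^ (m + n) := by
    intro a b hab
    rw [weightedNorm, weightedNorm, norm_mul, ← hab, pow_add]
    ring
  rw [hweight i j hij, hweight m n rfl] at key
  exact lt_of_mul_lt_mul_right key (pow_nonneg hr.le _)

theorem weightedNorm_le_norm_coeff_zero_of_mul_eq_one {f g : PowerSeries E} (hf : f ∈ Hcal E)
    (hg : g ∈ Hcal E) (hfg : f * g = 1) {r : ℝ} (hr0 : 0 < r) (hr1 : r < 1) (k : ℕ) :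
    weightedNorm r f k ≤ ‖coeff 0 f‖ := by
  have hunit : ∀ {h : PowerSeries E}, IsUnit h → 0 < weightedNorm r h 0 := fun hh => by
    rw [weightedNorm_pos_iff hr0, coeff_zero_eq_constantCoeff_apply]
    exact (hh.map constantCoeff).ne_zero
  have hfu := hunit (IsUnit.of_mul_eq_one g hfg)
  have hgu := hunit (IsUnit.of_mul_eq_one_right f hfg)
  obtain ⟨m, hm⟩ := exists_isLeast_argmax_of_tendsto_zero (hf r hr0.le hr1) hfu
  obtain ⟨n, hn⟩ := exists_isLeast_argmax_of_tendsto_zero (hg r hr0.le hr1) hgu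
  have hfm := (weightedNorm_pos_iff hr0).1 (hfu.trans_le (hm.1 0))
  have hgn := (weightedNorm_pos_iff hr0).1 (hgu.trans_le (hn.1 0))
  have hmn := norm_coeff_add_mul_eq_of_isLeast_argmax hr0 hm hn hfm hgn
  have hm0 : m = 0 := by
    by_contra hm0
    rw [hfg, coeff_one, if_neg (by omega), norm_zero] at hmn
    exact mul_ne_zero (norm_ne_zero_iff.2 hfm) (norm_ne_zero_iff.2 hgn) hmn.symm
  simpa [hm0, weightedNorm] using hm.1 k

theorem norm_coeff_le_norm_coeff_zero_of_mul_eq_one {f g : PowerSeries E} (hf : f ∈ Hcal E)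
    (hg : g ∈ Hcal E) (hfg : f * g = 1) (k : ℕ) : ‖coeff k f‖ ≤ ‖coeff 0 f‖ := by
  have hlim : Tendsto (fun r : ℝ => weightedNorm r f k) (𝓝 1) (𝓝 (‖coeff k f‖ * 1 ^ k)) :=
    tendsto_const_nhds.mul (tendsto_id.pow k)
  rw [one_pow, mul_one] at hlim
  refine le_of_tendsto (hlim.mono_left (nhdsWithin_le_nhds (s := Set.Iio 1))) ?_
  filter_upwards [Ioo_mem_nhdsLT zero_lt_one] with r hr
  exact weightedNorm_le_norm_coeff_zero_of_mul_eq_one hf hg hfg hr.1 hr.2 k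

end PowerSeries

theorem LambdaInvP_subset_Hcal (E : Type) [NormedField E] : LambdaInvP E ⊆ Hcal E := by
  rintro f ⟨C, hC⟩ r hr0 hr1
  have hCr : Tendsto (fun n : ℕ => C * r ^ n) atTop (𝓝 0) := by
    simpa using (tendsto_pow_atTop_nhds_zero_of_lt_one hr0 hr1).const_mul C
  exact squeeze_zero (fun n => by positivity)
    (fun n => mul_le_mul_of_nonneg_right (hC n) (pow_nonneg hr0 _)) hCr

theorem units_of_Hcal_are_bounded_general
    (E : Type) [NormedField E] [IsUltrametricDist E] :
    (∀ f g : PowerSeries E, f ∈ Hcal E → g ∈ Hcal E → f * g = 1 →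
      (∃ C : ℝ, ∀ n : ℕ, ‖(PowerSeries.coeff n) f‖ ≤ C) ∧
      (∃ C : ℝ, ∀ n : ℕ, ‖(PowerSeries.coeff n) g‖ ≤ C)) ∧
    (∀ f : PowerSeries E,
      (f ∈ Hcal E ∧ ∃ g ∈ Hcal E, f * g = 1) ↔
      (f ∈ LambdaInvP E ∧ ∃ g ∈ LambdaInvP E, f * g = 1)) := by
  have bounded : ∀ f g : PowerSeries E, f ∈ Hcal E → g ∈ Hcal E → f * g = 1 →
      f ∈ LambdaInvP E ∧ g ∈ LambdaInvP E := fun f g hf hg hfg =>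
    ⟨⟨_, PowerSeries.norm_coeff_le_norm_coeff_zero_of_mul_eq_one hf hg hfg⟩,
      ⟨_, PowerSeries.norm_coeff_le_norm_coeff_zero_of_mul_eq_one hg hf (by rwa [mul_comm])⟩⟩
  refine ⟨bounded, fun f => ⟨?_, ?_⟩⟩
  · rintro ⟨hf, g, hg, hfg⟩
    exact ⟨(bounded f g hf hg hfg).1, g, (bounded f g hf hg hfg).2, hfg⟩
  · rintro ⟨hf, g, hg, hfg⟩
    exact ⟨LambdaInvP_subset_Hcal E hf, g, LambdaInvP_subset_Hcal E hg, hfg⟩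

/-- Every unit of `ℋ` has bounded coefficients: if `f · g = 1` with `f, g ∈ ℋ`, then the
coefficient sequences of both `f` and `g` are bounded.  Consequently `ℋ^× = (Λ[1/p])^×`:
an element `f` is invertible in `ℋ` if and only if it lies in `Λ[1/p]` and is invertible
there. -/
theorem units_of_Hcal_are_bounded
    (p : ℕ) [Fact (Nat.Prime p)]
    (E : Type) [NormedField E] [IsUltrametricDist E]
    [NormedAlgebra ℚ_[p] E] [FiniteDimensional ℚ_[p] E]
    (hnorm : ∀ x : ℚ_[p], ‖algebraMap ℚ_[p] E x‖ = ‖x‖) :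
    (∀ f g : PowerSeries E, f ∈ Hcal E → g ∈ Hcal E → f * g = 1 →
      (∃ C : ℝ, ∀ n : ℕ, ‖(PowerSeries.coeff n) f‖ ≤ C) ∧
      (∃ C : ℝ, ∀ n : ℕ, ‖(PowerSeries.coeff n) g‖ ≤ C)) ∧
    (∀ f : PowerSeries E,
      (f ∈ Hcal E ∧ ∃ g ∈ Hcal E, f * g = 1) ↔
      (f ∈ LambdaInvP E ∧ ∃ g ∈ LambdaInvP E, f * g = 1)) :=
  units_of_Hcal_are_bounded_general E
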